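/- Let i₀ ≥ 0 and β ≥ i₀ be integers, λ, γ real with 1 + λ/2 > 0 and γ + λ/2 > 0, and z complex. Then Σ_{i=i₀}^{β} [(-β)_i (1+λ/2)_{i₀} (γ+λ/2)_{i₀}] / [(-β)_{i₀} (1+λ/2)_i (γ+λ/2)_i] · z^i = z^{i₀} Σ_{l=0}^{β-i₀} [(i₀+λ/2)(i₀-1+γ+λ/2) B(i₀+λ/2, l+1) B(i₀-1+γ+λ/2, l+1) (-(β-i₀))_l / ((1)_l l!)] z^l, where B denotes the Beta function. -/

import Mathlib

/-- Euler Beta function `B(x,y) = Γ(x)Γ(y)/Γ(x+y)`. -/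
noncomputable def eulerBeta (x y : ℝ) : ℝ := Real.Gamma x * Real.Gamma y / Real.Gamma (x + y)

/-!
Writing `i = i₀ + l`, the Pochhammer quotients on the left telescope, `(x)_{i₀+l} / (x)_{i₀} =
(x + i₀)_l`, while `x B(x, l + 1) = l! / (x + 1)_l` turns the Beta factors on the right into the
same reciprocal Pochhammer symbols; `(1)_l = l!` cancels the remaining factorials.
-/

open Polynomial Nat

theorem ascPochhammer_eval_add {S : Type*} [CommSemiring S] (n m : ℕ) (x : S) :
    (ascPochhammer S (n + m)).eval x =
      (ascPochhammer S n).eval x * (ascPochhammer S m).eval (x + n) := by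
  simp [← ascPochhammer_mul, eval_comp]

theorem ascPochhammer_eval_add_div {K : Type*} [Field K] {n : ℕ} {x : K}
    (hx : (ascPochhammer K n).eval x ≠ 0) (m : ℕ) :
    (ascPochhammer K (n + m)).eval x / (ascPochhammer K n).eval x =
      (ascPochhammer K m).eval (x + n) := by
  rw [ascPochhammer_eval_add, mul_div_cancel_left₀ _ hx]

@[simp, norm_cast]
theorem Complex.ofReal_ascPochhammer_eval (n : ℕ) (x : ℝ) :
    (((ascPochhammer ℝ n).eval x : ℝ) : ℂ) = (ascPochhammer ℂ n).eval (x : ℂ) := by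
  rw [← ascPochhammer_map Complex.ofRealHom, eval_map]
  exact (eval₂_at_apply Complex.ofRealHom x).symm

theorem ascPochhammer_eval_neg_natCast_ne_zero {K : Type*} [CommRing K] [IsDomain K]
    [CharZero K] {n k : ℕ} (h : n ≤ k) : (ascPochhammer K n).eval (-(k : K)) ≠ 0 := by
  rw [Ne, ascPochhammer_eval_eq_zero_iff, neg_neg]
  rintro ⟨j, hj, hjk⟩
  exact absurd (Nat.cast_injective hjk) (by omega)

theorem Real.Gamma_add_nat_eq_mul_ascPochhammer {x : ℝ} (hx : 0 < x) (n : ℕ) :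
    Real.Gamma (x + n) = Real.Gamma x * (ascPochhammer ℝ n).eval x := by
  induction n with
  | zero => simp
  | succ n ih =>
    rw [Nat.cast_succ, ← add_assoc, Real.Gamma_add_one (by positivity), ih,
      ascPochhammer_succ_eval]
    ring

theorem mul_eulerBeta_natCast_add_one {x : ℝ} (hx : 0 < x) (n : ℕ) :
    x * eulerBeta x (n + 1) = n ! / (ascPochhammer ℝ n).eval (x + 1) := by
  have hΓ : Real.Gamma (x + (n + 1)) = x * Real.Gamma x * (ascPochhammer ℝ n).eval (x + 1) := by
    rw [← add_assoc, add_right_comm, Real.Gamma_add_nat_eq_mul_ascPochhammer (by positivity),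
      Real.Gamma_add_one hx.ne']
  have hP : (ascPochhammer ℝ n).eval (x + 1) ≠ 0 := (ascPochhammer_pos n _ (by positivity)).ne'
  have hG : Real.Gamma x ≠ 0 := (Real.Gamma_pos_of_pos hx).ne'
  rw [eulerBeta, Real.Gamma_nat_eq_factorial, hΓ]
  field_simp

theorem ascPochhammer_eval_ratio_add {K : Type*} [Field K] {n : ℕ} {x a b : K}
    (hx : (ascPochhammer K n).eval x ≠ 0) (ha : (ascPochhammer K n).eval a ≠ 0)
    (hb : (ascPochhammer K n).eval b ≠ 0) (m : ℕ) :
    (ascPochhammer K (n + m)).eval x * (ascPochhammer K n).eval a * (ascPochhammer K n).eval b /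
        ((ascPochhammer K n).eval x * (ascPochhammer K (n + m)).eval a *
          (ascPochhammer K (n + m)).eval b) =
      (ascPochhammer K m).eval (x + n) /
        ((ascPochhammer K m).eval (a + n) * (ascPochhammer K m).eval (b + n)) := by
  rw [← ascPochhammer_eval_add_div hx, ← ascPochhammer_eval_add_div ha,
    ← ascPochhammer_eval_add_div hb]
  field_simp

/-- shifted-index rearrangement identity. -/
theorem stmt9 (i₀ β : ℕ) (h : i₀ ≤ β) (lam γ : ℝ)
    (h1 : 0 < 1 + lam / 2) (h2 : 0 < γ + lam / 2)
    (h3 : 0 < (i₀ : ℝ) + lam / 2) (h4 : 0 < (i₀ : ℝ) - 1 + γ + lam / 2) (z : ℂ) :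
    ∑ i ∈ Finset.Icc i₀ β,
      ((ascPochhammer ℂ i).eval (-(β : ℂ)) *
        (ascPochhammer ℂ i₀).eval (1 + (lam : ℂ) / 2) *
        (ascPochhammer ℂ i₀).eval ((γ : ℂ) + (lam : ℂ) / 2)) /
      ((ascPochhammer ℂ i₀).eval (-(β : ℂ)) *
        (ascPochhammer ℂ i).eval (1 + (lam : ℂ) / 2) *
        (ascPochhammer ℂ i).eval ((γ : ℂ) + (lam : ℂ) / 2)) * z ^ i =
    z ^ i₀ * ∑ l ∈ Finset.range (β - i₀ + 1),
      ((((i₀ : ℝ) + lam / 2) * ((i₀ : ℝ) - 1 + γ + lam / 2) *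
        eulerBeta ((i₀ : ℝ) + lam / 2) ((l : ℝ) + 1) *
        eulerBeta ((i₀ : ℝ) - 1 + γ + lam / 2) ((l : ℝ) + 1) : ℝ) : ℂ) *
      ((ascPochhammer ℂ l).eval (-((β - i₀ : ℕ) : ℂ)) /
        ((ascPochhammer ℂ l).eval 1 * (Nat.factorial l : ℂ))) * z ^ l := by
  rw [← Finset.Ico_add_one_right_eq_Icc, Finset.sum_Ico_eq_sum_range, Finset.mul_sum,
    show β + 1 - i₀ = β - i₀ + 1 by omega]
  refine Finset.sum_congr rfl fun l _ => ?_
  have ha : (ascPochhammer ℂ i₀).eval (1 + (lam : ℂ) / 2) ≠ 0 := by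
    exact_mod_cast (ascPochhammer_pos i₀ _ h1).ne'
  have hb : (ascPochhammer ℂ i₀).eval ((γ : ℂ) + (lam : ℂ) / 2) ≠ 0 := by
    exact_mod_cast (ascPochhammer_pos i₀ _ h2).ne'
  have hcoef : ((i₀ : ℝ) + lam / 2) * ((i₀ : ℝ) - 1 + γ + lam / 2) *
      eulerBeta ((i₀ : ℝ) + lam / 2) ((l : ℝ) + 1) *
      eulerBeta ((i₀ : ℝ) - 1 + γ + lam / 2) ((l : ℝ) + 1) =
      l ! / (ascPochhammer ℝ l).eval (1 + lam / 2 + i₀) *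
        (l ! / (ascPochhammer ℝ l).eval (γ + lam / 2 + i₀)) := by
    calc _ = ((i₀ + lam / 2) * eulerBeta (i₀ + lam / 2) (l + 1)) *
          ((i₀ - 1 + γ + lam / 2) * eulerBeta (i₀ - 1 + γ + lam / 2) (l + 1)) := by ring
      _ = _ := by
        rw [mul_eulerBeta_natCast_add_one h3, mul_eulerBeta_natCast_add_one h4]
        ring_nf
  have hshift : -(β : ℂ) + i₀ = -((β - i₀ : ℕ) : ℂ) := by push_cast [Nat.cast_sub h]; ring
  have hl : (l ! : ℂ) ≠ 0 := Nat.cast_ne_zero.mpr l.factorial_ne_zero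
  rw [ascPochhammer_eval_ratio_add (ascPochhammer_eval_neg_natCast_ne_zero h) ha hb, pow_add,
    hcoef, hshift, ascPochhammer_eval_one]
  push_cast
  field_simp
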